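/- arXiv:1005.0503 — 2 statements merged into one kernel-verified Lean document; each statement's English description precedes it below -/
import Mathlib

section
/- Let A be an m×n real Toeplitz matrix (m ≥ n ≥ 2) with entries A(i,j) = a(j−i). Write A₋₁ for the common (m−1)×(n−1) Toeplitz submatrix (deleting first row and column), y = (a(1),…,a(n−1))ᵀ, z = (a(−1),…,a(1−m))ᵀ, and z̄ = (a(1−m),…,a(n−m−1))ᵀ. Then the trailing (n−1)×(n−1) principal submatrix of AᵀA equals A₋₁ᵀA₋₁ + yyᵀ, and the leading (n−1)×(n−1) principal submatrix of AᵀA equals A₋₁ᵀA₋₁ + z̄ z̄ᵀ. -/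
open Matrix

/-!
`AᵀA = ∑ᵢ rᵢᵀ rᵢ` over the rows `rᵢ` of `A`; splitting off the first (resp. last) row leaves the
Gram matrix of the remaining rows. For a Toeplitz matrix, deleting the last row and column gives
the same matrix `A₋₁` as deleting the first ones, so both principal submatrices are `A₋₁ᵀA₋₁`
plus a rank-one term.
-/

namespace Matrix

variable {α : Type*} [Mul α] [AddCommMonoid α] {m : ℕ} {n o p q : Type*}

theorem submatrix_transpose_mul_eq_succ_add_vecMulVec (A : Matrix (Fin (m + 1)) n α)
    (B : Matrix (Fin (m + 1)) o α) (r : p → n) (c : q → o) :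
    (Aᵀ * B).submatrix r c = (A.submatrix Fin.succ r)ᵀ * B.submatrix Fin.succ c +
      vecMulVec (fun i => A 0 (r i)) (fun j => B 0 (c j)) := by
  ext i j
  simp only [submatrix_apply, add_apply, mul_apply, transpose_apply, vecMulVec_apply,
    Fin.sum_univ_succ, add_comm]

theorem submatrix_transpose_mul_eq_castSucc_add_vecMulVec (A : Matrix (Fin (m + 1)) n α)
    (B : Matrix (Fin (m + 1)) o α) (r : p → n) (c : q → o) :
    (Aᵀ * B).submatrix r c = (A.submatrix Fin.castSucc r)ᵀ * B.submatrix Fin.castSucc c +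
      vecMulVec (fun i => A (Fin.last m) (r i)) (fun j => B (Fin.last m) (c j)) := by
  ext i j
  simp only [submatrix_apply, add_apply, mul_apply, transpose_apply, vecMulVec_apply,
    Fin.sum_univ_castSucc]

end Matrix

theorem submatrix_castSucc_eq_submatrix_succ_of_toeplitz {R : Type*} {m n : ℕ}
    {A : Matrix (Fin (m + 1)) (Fin (n + 1)) R} {a : ℤ → R}
    (hA : ∀ (i : Fin (m + 1)) (j : Fin (n + 1)), A i j = a ((j : ℤ) - (i : ℤ))) :
    A.submatrix Fin.castSucc Fin.castSucc = A.submatrix Fin.succ Fin.succ := by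
  ext i j
  simp only [submatrix_apply, hA, Fin.val_castSucc, Fin.val_succ]
  push_cast
  ring_nf

theorem stmt7_general (m n : ℕ)
    (A : Matrix (Fin (m + 1)) (Fin (n + 1)) ℝ) (a : ℤ → ℝ)
    (hA : ∀ (i : Fin (m + 1)) (j : Fin (n + 1)), A i j = a ((j : ℤ) - (i : ℤ))) :
    (Aᵀ * A).submatrix Fin.succ Fin.succ =
        (A.submatrix Fin.succ Fin.succ)ᵀ * A.submatrix Fin.succ Fin.succ +
          Matrix.vecMulVec (fun t : Fin n => a ((t : ℤ) + 1))
            (fun t : Fin n => a ((t : ℤ) + 1)) ∧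
      (Aᵀ * A).submatrix Fin.castSucc Fin.castSucc =
        (A.submatrix Fin.succ Fin.succ)ᵀ * A.submatrix Fin.succ Fin.succ +
          Matrix.vecMulVec (fun t : Fin n => a ((t : ℤ) - (m : ℤ)))
            (fun t : Fin n => a ((t : ℤ) - (m : ℤ))) := by
  have first_row : (fun t : Fin n => A 0 t.succ) = fun t : Fin n => a ((t : ℤ) + 1) := by
    funext t
    simp [hA]
  have last_row :
      (fun t : Fin n => A (Fin.last m) t.castSucc) = fun t : Fin n => a ((t : ℤ) - m) := by
    funext t
    simp [hA]
  constructor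
  · rw [submatrix_transpose_mul_eq_succ_add_vecMulVec, first_row]
  · rw [submatrix_transpose_mul_eq_castSucc_add_vecMulVec, last_row,
      submatrix_castSucc_eq_submatrix_succ_of_toeplitz hA]

/-- Let `A` be an `(m+1) × (n+1)` real Toeplitz matrix, `A i j = a (j − i)`,
with `m + 1 ≥ n + 1 ≥ 2`. With `A₋₁` the `m × n` submatrix deleting the first
row and column, `y = (a 1, …, a n)ᵀ` and `z̄ = (a (−m), …, a (n − m − 1))ᵀ`:
the trailing `n × n` principal submatrix of `AᵀA` is `A₋₁ᵀA₋₁ + y yᵀ` and the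
leading `n × n` principal submatrix of `AᵀA` is `A₋₁ᵀA₋₁ + z̄ z̄ᵀ`. -/
theorem stmt7 (m n : ℕ) (hn : 1 ≤ n) (hmn : n ≤ m)
    (A : Matrix (Fin (m + 1)) (Fin (n + 1)) ℝ) (a : ℤ → ℝ)
    (hA : ∀ (i : Fin (m + 1)) (j : Fin (n + 1)), A i j = a ((j : ℤ) - (i : ℤ))) :
    (Aᵀ * A).submatrix Fin.succ Fin.succ =
        (A.submatrix Fin.succ Fin.succ)ᵀ * A.submatrix Fin.succ Fin.succ +
          Matrix.vecMulVec (fun t : Fin n => a ((t : ℤ) + 1))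
            (fun t : Fin n => a ((t : ℤ) + 1)) ∧
      (Aᵀ * A).submatrix Fin.castSucc Fin.castSucc =
        (A.submatrix Fin.succ Fin.succ)ᵀ * A.submatrix Fin.succ Fin.succ +
          Matrix.vecMulVec (fun t : Fin n => a ((t : ℤ) - (m : ℤ)))
            (fun t : Fin n => a ((t : ℤ) - (m : ℤ))) :=
  stmt7_general m n A a hA
end

section
/- Let A be an m×n real Toeplitz matrix of full rank n (m ≥ n ≥ 2) with AᵀA = RᵀR its Cholesky factorization (R upper triangular with positive diagonal). With the notation y, z̄, u, R_b, R_t as above, the identity R_bᵀR_b = R_tᵀR_t + yyᵀ − uuᵀ − z̄ z̄ᵀ holds. -/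
open Matrix

/-!
The Gram matrix `AᵀA` of a Toeplitz matrix is invariant under the shift `(i, j) ↦ (i + 1, j + 1)`
up to two rank-one terms: deleting the first row of the trailing columns and the last row of the
leading columns of `A` gives the same matrix, so the two Gram blocks differ by the outer products
of the deleted rows, `y yᵀ` and `z̄ z̄ᵀ`. Computing the same two blocks of `RᵀR` instead, the first
one loses the first row `u` of `R`, and the second loses the last row of `R`, which vanishes on the
leading columns because `R` is upper triangular.
-/

namespace Matrix

variable {α : Type*} {k n : ℕ}

theorem submatrix_succ_succ_eq_of_toeplitz {m : ℕ} (A : Matrix (Fin (m + 1)) (Fin (n + 1)) α)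
    (a : ℤ → α) (hA : ∀ i j, A i j = a ((j : ℤ) - (i : ℤ))) :
    A.submatrix Fin.succ Fin.succ = A.submatrix Fin.castSucc Fin.castSucc := by
  ext i j
  simp only [submatrix_apply, hA, Fin.val_succ, Fin.val_castSucc]
  push_cast
  ring_nf

variable [CommRing α]

theorem transpose_mul_self_submatrix_succ_succ (M : Matrix (Fin (k + 1)) (Fin (n + 1)) α) :
    (Mᵀ * M).submatrix Fin.succ Fin.succ =
      (M.submatrix Fin.succ Fin.succ)ᵀ * M.submatrix Fin.succ Fin.succ +
        vecMulVec (fun j : Fin n => M 0 j.succ) (fun j : Fin n => M 0 j.succ) := by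
  ext i j
  simp only [submatrix_apply, mul_apply, transpose_apply, add_apply, vecMulVec_apply,
    Fin.sum_univ_succ]
  ring

theorem transpose_mul_self_submatrix_castSucc_castSucc
    (M : Matrix (Fin (k + 1)) (Fin (n + 1)) α) :
    (Mᵀ * M).submatrix Fin.castSucc Fin.castSucc =
      (M.submatrix Fin.castSucc Fin.castSucc)ᵀ * M.submatrix Fin.castSucc Fin.castSucc +
        vecMulVec (fun j : Fin n => M (Fin.last k) j.castSucc)
          (fun j : Fin n => M (Fin.last k) j.castSucc) := by
  ext i j
  simp only [submatrix_apply, mul_apply, transpose_apply, add_apply, vecMulVec_apply,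
    Fin.sum_univ_castSucc]

end Matrix

theorem stmt9_general (m n : ℕ)
    (A : Matrix (Fin (m + 1)) (Fin (n + 1)) ℝ) (a : ℤ → ℝ)
    (hA : ∀ (i : Fin (m + 1)) (j : Fin (n + 1)), A i j = a ((j : ℤ) - (i : ℤ)))
    (R : Matrix (Fin (n + 1)) (Fin (n + 1)) ℝ)
    (hupper : ∀ i j : Fin (n + 1), j < i → R i j = 0)
    (hchol : Aᵀ * A = Rᵀ * R) :
    (R.submatrix Fin.succ Fin.succ)ᵀ * R.submatrix Fin.succ Fin.succ =
      (R.submatrix Fin.castSucc Fin.castSucc)ᵀ *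
          R.submatrix Fin.castSucc Fin.castSucc +
        Matrix.vecMulVec (fun t : Fin n => a ((t : ℤ) + 1))
          (fun t : Fin n => a ((t : ℤ) + 1)) -
        Matrix.vecMulVec (fun j : Fin n => R 0 j.succ)
          (fun j : Fin n => R 0 j.succ) -
        Matrix.vecMulVec (fun t : Fin n => a ((t : ℤ) - (m : ℤ)))
          (fun t : Fin n => a ((t : ℤ) - (m : ℤ))) := by
  have hy : (fun j : Fin n => A 0 j.succ) = fun t : Fin n => a ((t : ℤ) + 1) := by
    ext t; simp [hA]
  have hz : (fun j : Fin n => A (Fin.last m) j.castSucc) =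
      fun t : Fin n => a ((t : ℤ) - (m : ℤ)) := by
    ext t; simp [hA]
  have hlast : (fun j : Fin n => R (Fin.last n) j.castSucc) = 0 := by
    ext j; exact hupper _ _ (Fin.castSucc_lt_last j)
  calc _ = (Rᵀ * R).submatrix Fin.succ Fin.succ -
          vecMulVec (fun j : Fin n => R 0 j.succ) (fun j : Fin n => R 0 j.succ) :=
        eq_sub_of_add_eq (transpose_mul_self_submatrix_succ_succ R).symm
    _ = (Aᵀ * A).submatrix Fin.castSucc Fin.castSucc -
          vecMulVec (fun t : Fin n => a ((t : ℤ) - (m : ℤ)))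
            (fun t : Fin n => a ((t : ℤ) - (m : ℤ))) +
          vecMulVec (fun t : Fin n => a ((t : ℤ) + 1)) (fun t : Fin n => a ((t : ℤ) + 1)) -
          vecMulVec (fun j : Fin n => R 0 j.succ) (fun j : Fin n => R 0 j.succ) := by
        rw [← hchol, transpose_mul_self_submatrix_succ_succ,
          transpose_mul_self_submatrix_castSucc_castSucc,
          submatrix_succ_succ_eq_of_toeplitz A a hA, hy, hz]
        abel
    _ = _ := by
        rw [hchol, transpose_mul_self_submatrix_castSucc_castSucc, hlast, vecMulVec_zero, add_zero]
        abel

/-- Let `A` be an `(m+1) × (n+1)` real Toeplitz matrix (`A i j = a (j − i)`,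
`m + 1 ≥ n + 1 ≥ 2`) of full rank `n + 1`, and let `AᵀA = RᵀR` be its Cholesky
factorization (`R` upper triangular with positive diagonal). With
`y = (a 1, …, a n)ᵀ`, `z̄ = (a (−m), …, a (n − m − 1))ᵀ`,
`u` the off-diagonal part of the first row of `R`, and `R_b`, `R_t` the
trailing and leading `n × n` submatrices of `R`, we have
`R_bᵀR_b = R_tᵀR_t + y yᵀ − u uᵀ − z̄ z̄ᵀ`. -/
theorem stmt9 (m n : ℕ) (hn : 1 ≤ n) (hmn : n ≤ m)
    (A : Matrix (Fin (m + 1)) (Fin (n + 1)) ℝ) (a : ℤ → ℝ)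
    (hA : ∀ (i : Fin (m + 1)) (j : Fin (n + 1)), A i j = a ((j : ℤ) - (i : ℤ)))
    (hrank : A.rank = n + 1)
    (R : Matrix (Fin (n + 1)) (Fin (n + 1)) ℝ)
    (hupper : ∀ i j : Fin (n + 1), j < i → R i j = 0)
    (hdiag : ∀ i : Fin (n + 1), 0 < R i i)
    (hchol : Aᵀ * A = Rᵀ * R) :
    (R.submatrix Fin.succ Fin.succ)ᵀ * R.submatrix Fin.succ Fin.succ =
      (R.submatrix Fin.castSucc Fin.castSucc)ᵀ *
          R.submatrix Fin.castSucc Fin.castSucc +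
        Matrix.vecMulVec (fun t : Fin n => a ((t : ℤ) + 1))
          (fun t : Fin n => a ((t : ℤ) + 1)) -
        Matrix.vecMulVec (fun j : Fin n => R 0 j.succ)
          (fun j : Fin n => R 0 j.succ) -
        Matrix.vecMulVec (fun t : Fin n => a ((t : ℤ) - (m : ℤ)))
          (fun t : Fin n => a ((t : ℤ) - (m : ℤ))) :=
  stmt9_general m n A a hA R hupper hchol
end
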